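/- arXiv:1302.6914 — 3 statements merged into one kernel-verified Lean document; each statement's English description precedes it below -/
import Mathlib

section
/- Let n be even, n | m, and consider the access sequence A obtained by repeating ⟨1, n/2+1, 2, n/2+2, ..., n/2, n⟩ exactly m/n times. Then under the unified bound, the total cost of A is at most 2(m/n)·c·log n + (n−2)(m/n)·c for some constant c, which is O(m); i.e., every access except the first two of each cycle satisfies min_{y∈S}(w_i(y) + d_S(a_i,y)) ≤ 3. -/
/-- Rank distance within a finite set `T`. -/
def rankDist (T : Finset ℕ) (x y : ℕ) : ℕ :=
  if x < y then (T.filter (fun z => x < z ∧ z ≤ y)).card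
  else (T.filter (fun z => y < z ∧ z ≤ x)).card

/-- Working-set number of `z` at time `i` (0-indexed) for the access sequence
`a` over a universe of size `n`. -/
def wsNum (a : ℕ → ℕ) (n i z : ℕ) : ℕ :=
  if h : ((Finset.range i).filter (fun j => a j = z)).Nonempty then
    ((Finset.Icc (((Finset.range i).filter (fun j => a j = z)).max' h + 1) i).image a).card
  else n

/-- The unified-bound quantity for access `a i` at time `i` over `S = {1,…,n}`. -/
noncomputable def unifiedMin (a : ℕ → ℕ) (n i : ℕ) : ℕ :=
  sInf {v : ℕ | ∃ y ∈ Finset.Icc 1 n,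
    v = wsNum a n i y + rankDist (Finset.Icc 1 n) (a i) y}

section Aux

variable {n : ℕ} {a : ℕ → ℕ}

lemma aux_mem (hn : 0 < n) (heven : 2 ∣ n)
    (ha : ∀ i, a i = if i % n % 2 = 0 then i % n / 2 + 1 else n / 2 + i % n / 2 + 1)
    (i : ℕ) : 1 ≤ a i ∧ a i ≤ n := by
  have hr : i % n < n := Nat.mod_lt i hn
  rw [ha i]
  rcases heven with ⟨t, ht⟩
  split <;> omega

lemma aux_half (hn : 0 < n) (heven : 2 ∣ n)
    (ha : ∀ i, a i = if i % n % 2 = 0 then i % n / 2 + 1 else n / 2 + i % n / 2 + 1)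
    (i : ℕ) : (i % n % 2 = 0 → a i ≤ n / 2) ∧ (i % n % 2 = 1 → n / 2 + 1 ≤ a i) := by
  have hr : i % n < n := Nat.mod_lt i hn
  rw [ha i]
  rcases heven with ⟨t, ht⟩
  constructor <;> intro h <;> simp only [h] <;> simp <;> omega

lemma aux_ne_succ (hn : 0 < n) (heven : 2 ∣ n)
    (ha : ∀ i, a i = if i % n % 2 = 0 then i % n / 2 + 1 else n / 2 + i % n / 2 + 1)
    (i : ℕ) : a (i + 1) ≠ a i := by
  have h1 := aux_half hn heven ha i
  have h2 := aux_half hn heven ha (i + 1)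
  have hr : i % n < n := Nat.mod_lt i hn
  obtain ⟨q, hq⟩ : ∃ q, i = n * q + i % n := ⟨i / n, by rw [Nat.div_add_mod]⟩
  have hp : (i + 1) % n % 2 ≠ i % n % 2 := by
    rcases heven with ⟨t, ht⟩
    by_cases hc : i % n = n - 1
    · have he : (i + 1) % n = 0 := by
        have : i + 1 = n * q + n := by omega
        rw [this, Nat.mul_add_mod, Nat.mod_self]
      omega
    · have he : (i + 1) % n = i % n + 1 := by
        have : i + 1 = n * q + (i % n + 1) := by omega
        rw [this, Nat.mul_add_mod, Nat.mod_eq_of_lt (by omega)]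
      omega
  have e1 : i % n % 2 = 0 ∨ i % n % 2 = 1 := Nat.mod_two_eq_zero_or_one _
  have e2 : (i+1) % n % 2 = 0 ∨ (i+1) % n % 2 = 1 := Nat.mod_two_eq_zero_or_one _
  rcases heven with ⟨t, ht⟩
  rcases e1 with h | h <;> rcases e2 with h' | h' <;>
    first
    | omega
    | (have := h1.1; have := h1.2; have := h2.1; have := h2.2; omega)

lemma aux_step (hn : 0 < n) (heven : 2 ∣ n)
    (ha : ∀ i, a i = if i % n % 2 = 0 then i % n / 2 + 1 else n / 2 + i % n / 2 + 1)
    (i : ℕ) (h2 : 2 ≤ i % n) : a i = a (i - 2) + 1 := by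
  have hr : i % n < n := Nat.mod_lt i hn
  have hi : 2 ≤ i := le_trans h2 (Nat.mod_le i n)
  obtain ⟨q, hq⟩ : ∃ q, i = n * q + i % n := ⟨i / n, by rw [Nat.div_add_mod]⟩
  have hm : (i - 2) % n = i % n - 2 := by
    have : i - 2 = n * q + (i % n - 2) := by omega
    rw [this, Nat.mul_add_mod, Nat.mod_eq_of_lt (by omega)]
  rw [ha i, ha (i - 2), hm]
  rcases Nat.mod_two_eq_zero_or_one (i % n) with h | h
  · have h' : (i % n - 2) % 2 = 0 := by omega
    simp [h, h']; omega
  · have h' : (i % n - 2) % 2 = 1 := by omega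
    simp only [h, h']; simp; omega

lemma rankDist_self (T : Finset ℕ) (x : ℕ) : rankDist T x x = 0 := by
  simp only [rankDist, lt_self_iff_false, if_false]
  rw [Finset.card_eq_zero, Finset.filter_eq_empty_iff]
  intro z _
  omega

lemma rankDist_succ {y : ℕ} (hy : 1 ≤ y) (hyn : y + 1 ≤ n) :
    rankDist (Finset.Icc 1 n) (y + 1) y = 1 := by
  simp only [rankDist]
  rw [if_neg (by omega)]
  have : (Finset.Icc 1 n).filter (fun z => y < z ∧ z ≤ y + 1) = {y + 1} := by
    ext z
    simp only [Finset.mem_filter, Finset.mem_Icc, Finset.mem_singleton]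
    omega
  rw [this, Finset.card_singleton]

lemma wsNum_pos (hn : 0 < n) (i z : ℕ) : 1 ≤ wsNum a n i z := by
  unfold wsNum
  split
  · rename_i h
    rw [Nat.one_le_iff_ne_zero, ← Nat.pos_iff_ne_zero, Finset.card_pos]
    refine ⟨a i, Finset.mem_image.2 ⟨i, ?_, rfl⟩⟩
    have hm : ((Finset.range i).filter (fun j => a j = z)).max' h ∈
        (Finset.range i).filter (fun j => a j = z) := Finset.max'_mem _ _
    rw [Finset.mem_filter, Finset.mem_range] at hm
    rw [Finset.mem_Icc]
    omega
  · exact hn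

lemma wsNum_le (hmem : ∀ j, a j ∈ Finset.Icc 1 n) (i z : ℕ) : wsNum a n i z ≤ n := by
  unfold wsNum
  split
  · calc _ ≤ (Finset.Icc 1 n).card := by
          apply Finset.card_le_card
          intro x hx
          rw [Finset.mem_image] at hx
          obtain ⟨j, _, rfl⟩ := hx
          exact hmem j
      _ = n := by rw [Nat.card_Icc]; omega
  · exact le_rfl

lemma wsNum_two {i : ℕ} (hne : a (i - 1) ≠ a (i - 2)) (h2 : 2 ≤ i) :
    wsNum a n i (a (i - 2)) ≤ 2 := by
  set z := a (i - 2) with hz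
  have hmem : i - 2 ∈ (Finset.range i).filter (fun j => a j = z) := by
    rw [Finset.mem_filter, Finset.mem_range]
    exact ⟨by omega, rfl⟩
  have hne' : ((Finset.range i).filter (fun j => a j = z)).Nonempty := ⟨_, hmem⟩
  have hmax : ((Finset.range i).filter (fun j => a j = z)).max' hne' = i - 2 := by
    have hle : ((Finset.range i).filter (fun j => a j = z)).max' hne' ≤ i - 1 := by
      have := Finset.max'_mem _ hne'
      rw [Finset.mem_filter, Finset.mem_range] at this
      omega
    have hge : i - 2 ≤ ((Finset.range i).filter (fun j => a j = z)).max' hne' :=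
      Finset.le_max' _ _ hmem
    rcases Nat.lt_or_ge (((Finset.range i).filter (fun j => a j = z)).max' hne') (i - 1)
        with h | h
    · omega
    · exfalso
      have hm := Finset.max'_mem _ hne'
      rw [Finset.mem_filter] at hm
      have : ((Finset.range i).filter (fun j => a j = z)).max' hne' = i - 1 := by omega
      rw [this] at hm
      exact hne hm.2
  unfold wsNum
  rw [dif_pos hne', hmax]
  calc _ ≤ (Finset.Icc (i - 2 + 1) i).card := Finset.card_image_le
    _ = 2 := by rw [Nat.card_Icc]; omega

lemma unifiedMin_pos (hn : 0 < n) (hmem : ∀ j, a j ∈ Finset.Icc 1 n) (i : ℕ) :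
    1 ≤ unifiedMin a n i := by
  have hne : {v : ℕ | ∃ y ∈ Finset.Icc 1 n,
      v = wsNum a n i y + rankDist (Finset.Icc 1 n) (a i) y}.Nonempty :=
    ⟨_, a i, hmem i, rfl⟩
  obtain ⟨y, _, hv⟩ := Nat.sInf_mem hne
  rw [unifiedMin, hv]
  have := wsNum_pos (a := a) hn i y
  omega

lemma unifiedMin_le_n (hmem : ∀ j, a j ∈ Finset.Icc 1 n) (i : ℕ) :
    unifiedMin a n i ≤ n := by
  have h : wsNum a n i (a i) + rankDist (Finset.Icc 1 n) (a i) (a i) ≤ n := by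
    rw [rankDist_self]
    simpa using wsNum_le hmem i (a i)
  exact le_trans (Nat.sInf_le ⟨a i, hmem i, rfl⟩) h

lemma unifiedMin_le_three (hmem : ∀ j, a j ∈ Finset.Icc 1 n)
    (i : ℕ) (h2 : 2 ≤ i) (hne : a (i - 1) ≠ a (i - 2))
    (hstep : a i = a (i - 2) + 1) : unifiedMin a n i ≤ 3 := by
  have hy := hmem (i - 2)
  rw [Finset.mem_Icc] at hy
  have hrank : rankDist (Finset.Icc 1 n) (a i) (a (i - 2)) = 1 := by
    rw [hstep]
    have hai := hmem i
    rw [Finset.mem_Icc, hstep] at hai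
    exact rankDist_succ hy.1 hai.2
  have hle : wsNum a n i (a (i - 2)) + rankDist (Finset.Icc 1 n) (a i) (a (i - 2)) ≤ 3 := by
    rw [hrank]
    have := wsNum_two (a := a) (n := n) hne h2
    omega
  exact le_trans (Nat.sInf_le ⟨a (i - 2), hmem (i - 2), rfl⟩) hle

lemma sum_mod_cycle (f : ℕ → ℝ) (n k : ℕ) :
    ∑ i ∈ Finset.range (k * n), f (i % n) = k * ∑ r ∈ Finset.range n, f r := by
  induction k with
  | zero => simp
  | succ k ih =>
    have h : (k + 1) * n = k * n + n := by ring
    rw [h, Finset.sum_range_add, ih]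
    have h2 : ∀ x ∈ Finset.range n, f ((k * n + x) % n) = f x := by
      intro x hx
      rw [Finset.mem_range] at hx
      rw [add_comm, Nat.add_mul_mod_self_right, Nat.mod_eq_of_lt hx]
    rw [Finset.sum_congr rfl h2]
    push_cast
    ring

lemma cycle_sum (L M : ℝ) (n : ℕ) (hn2 : 2 ≤ n) :
    ∑ r ∈ Finset.range n, (if r < 2 then L else M) = 2 * L + ((n : ℝ) - 2) * M := by
  have h1 : (Finset.range n).filter (fun r => r < 2) = Finset.range 2 := by
    ext x; simp only [Finset.mem_filter, Finset.mem_range]; omega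
  have h2 : (Finset.range n).filter (fun r => ¬ r < 2) = Finset.Ico 2 n := by
    ext x; simp only [Finset.mem_filter, Finset.mem_range, Finset.mem_Ico]; omega
  rw [Finset.sum_ite, h1, h2, Finset.sum_const, Finset.sum_const, Nat.card_Ico,
    Finset.card_range, nsmul_eq_mul, nsmul_eq_mul]
  rw [Nat.cast_sub hn2]
  push_cast
  ring

end Aux

/-- For even `n` with `n ∣ m` and the cyclic access sequence
`⟨1, n/2+1, 2, n/2+2, …, n/2, n⟩` repeated `m/n` times: every access except
the first two of each cycle has unified quantity at most `3`, and hence the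
total unified-bound cost is at most `2(m/n)·log₂ n + (n−2)(m/n)·log₂ 3 = O(m)`. -/
theorem unified_bound_on_interleaved_sequence (n m : ℕ) (hn : 0 < n)
    (heven : 2 ∣ n) (hnm : n ∣ m) (a : ℕ → ℕ)
    (ha : ∀ i, a i = if i % n % 2 = 0 then i % n / 2 + 1 else n / 2 + i % n / 2 + 1) :
    (∀ i, 2 ≤ i % n → unifiedMin a n i ≤ 3) ∧
    (∑ i ∈ Finset.range m, Real.logb 2 (unifiedMin a n i : ℝ)) ≤
      2 * ((m / n : ℕ) : ℝ) * Real.logb 2 (n : ℝ) +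
      (((n : ℝ) - 2) * ((m / n : ℕ) : ℝ)) * Real.logb 2 3 := by
  have hmem : ∀ j, a j ∈ Finset.Icc 1 n := by
    intro j
    rw [Finset.mem_Icc]
    exact aux_mem hn heven ha j
  have hn2 : 2 ≤ n := by
    rcases heven with ⟨t, ht⟩; omega
  have hpart1 : ∀ i, 2 ≤ i % n → unifiedMin a n i ≤ 3 := by
    intro i h2
    have hi : 2 ≤ i := le_trans h2 (Nat.mod_le i n)
    have hne : a (i - 1) ≠ a (i - 2) := by
      have := aux_ne_succ hn heven ha (i - 2)
      have h12 : i - 2 + 1 = i - 1 := by omega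
      rwa [h12] at this
    exact unifiedMin_le_three hmem i hi hne (aux_step hn heven ha i h2)
  refine ⟨hpart1, ?_⟩
  obtain ⟨k, hk⟩ := hnm
  have hkn : m / n = k := by rw [hk, Nat.mul_div_cancel_left _ hn]
  have hbound : ∀ i ∈ Finset.range m,
      Real.logb 2 (unifiedMin a n i : ℝ) ≤
        (fun r => if r < 2 then Real.logb 2 (n : ℝ) else Real.logb 2 3) (i % n) := by
    intro i _
    have hpos : (0 : ℝ) < (unifiedMin a n i : ℝ) := by
      have := unifiedMin_pos hn hmem i
      exact_mod_cast Nat.lt_of_lt_of_le Nat.zero_lt_one this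
    by_cases hc : i % n < 2
    · simp only [if_pos hc]
      apply Real.logb_le_logb_of_le one_lt_two hpos
      exact_mod_cast unifiedMin_le_n hmem i
    · simp only [if_neg hc]
      apply Real.logb_le_logb_of_le one_lt_two hpos
      exact_mod_cast hpart1 i (by omega)
  calc ∑ i ∈ Finset.range m, Real.logb 2 (unifiedMin a n i : ℝ)
      ≤ ∑ i ∈ Finset.range m,
          (fun r => if r < 2 then Real.logb 2 (n : ℝ) else Real.logb 2 3) (i % n) :=
        Finset.sum_le_sum hbound
    _ = k * ∑ r ∈ Finset.range n,
          (if r < 2 then Real.logb 2 (n : ℝ) else Real.logb 2 3) := by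
        rw [hk, mul_comm n k]
        exact sum_mod_cycle (fun r => if r < 2 then Real.logb 2 (n : ℝ) else Real.logb 2 3) n k
    _ = 2 * ((m / n : ℕ) : ℝ) * Real.logb 2 (n : ℝ) +
          (((n : ℝ) - 2) * ((m / n : ℕ) : ℝ)) * Real.logb 2 3 := by
        rw [cycle_sum _ _ n hn2, hkn]
        ring
end

section
/- In the layered structure where an element x first appears in tree T_j, it holds that w_i(x) ≥ 2^{2^{j−1}} (for j ≥ 2), and therefore j ≤ log₂ log₂ w_i(x) + O(1). -/
theorem Finset.card_lt_of_notMem_of_forall_le_card_mem {α : Type*} {S : Finset α} {w : α → ℕ}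
    (hS : ∀ z, w z ≤ S.card → z ∈ S) {x : α} (hx : x ∉ S) : S.card < w x :=
  lt_of_not_ge fun h => hx (hS x h)

theorem Nat.le_log_log_of_pow_pow_le {b k n : ℕ} (hb : 1 < b) (h : b ^ b ^ k ≤ n) :
    k ≤ Nat.log b (Nat.log b n) :=
  Nat.le_log_of_pow_le hb (Nat.le_log_of_pow_le hb h)

theorem layer_index_bound_general (T : ℕ → Finset ℕ) (w : ℕ → ℕ)
    (hcard : ∀ ℓ, (T ℓ).card = 2 ^ 2 ^ ℓ)
    (hrecent : ∀ ℓ z, w z ≤ (T ℓ).card → z ∈ T ℓ)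
    (x j : ℕ) (hx : x ∉ T (j - 1)) :
    2 ^ 2 ^ (j - 1) ≤ w x ∧ j ≤ Nat.log 2 (Nat.log 2 (w x)) + 2 := by
  have hw : 2 ^ 2 ^ (j - 1) ≤ w x := by
    rw [← hcard]
    exact (Finset.card_lt_of_notMem_of_forall_le_card_mem (hrecent (j - 1)) hx).le
  have hlog := Nat.le_log_log_of_pow_pow_le one_lt_two hw
  exact ⟨hw, by omega⟩

/-- In the layered structure, `T ℓ` has size `2^(2^ℓ)` and contains every
element whose working-set number is at most its size (it holds the most
recently accessed elements).  If `x` first appears in `T j` (so `x ∉ T (j-1)`)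
with `j ≥ 2`, then `w x ≥ 2^(2^(j−1))`, and therefore
`j ≤ log₂ log₂ (w x) + O(1)`. -/
theorem layer_index_bound (T : ℕ → Finset ℕ) (w : ℕ → ℕ)
    (hcard : ∀ ℓ, (T ℓ).card = 2 ^ 2 ^ ℓ)
    (hrecent : ∀ ℓ z, w z ≤ (T ℓ).card → z ∈ T ℓ)
    (x j : ℕ) (hj : 2 ≤ j) (hx : x ∉ T (j - 1)) :
    2 ^ 2 ^ (j - 1) ≤ w x ∧ j ≤ Nat.log 2 (Nat.log 2 (w x)) + 2 :=
  layer_index_bound_general T w hcard hrecent x j hx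
end

section
/- In the layered data structure, after an access to x found in T_j, x is inserted into T_1,...,T_{j−1} and the least-recently-inserted element is removed from each; this preserves the invariants |T_ℓ| = 2^{2^ℓ} for all ℓ < j and T_ℓ ⊆ T_{ℓ+1} for all ℓ, provided the invariants held before the access. -/
/-!
Enqueueing `x` and dequeueing the front turns each queue `Q ℓ` into `(Q ℓ ++ [x]).tail`.
Since `x` is new at the modified levels, this keeps every queue duplicate-free and of the
same length, which gives the size invariant. Appending `x` preserves the suffix relation
`Q ℓ <:+ Q (ℓ + 1)`, and because `Q ℓ` is strictly shorter it survives dropping the front of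
`Q (ℓ + 1)`, which gives the nesting invariant. At the top level every new element is either
old or `x`, and both lie in `T j`.
-/

namespace List

variable {α : Type*}

theorem IsSuffix.suffix_tail_of_length_lt {l₁ l₂ : List α} (h : l₁ <:+ l₂)
    (hlt : l₁.length < l₂.length) : l₁ <:+ l₂.tail := by
  cases l₂ with
  | nil => simp at hlt
  | cons a t => exact (suffix_cons_iff.mp h).resolve_left (by rintro rfl; exact lt_irrefl _ hlt)

theorem nodup_tail_append_singleton {l : List α} {x : α} (hl : l.Nodup) (hx : x ∉ l) :
    ((l ++ [x]).tail).Nodup := by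
  simpa using ((nodup_concat l x).mpr ⟨hx, hl⟩).tail

theorem card_toFinset_tail_append_singleton [DecidableEq α] {l : List α} {x : α} (hl : l.Nodup)
    (hx : x ∉ l) : ((l ++ [x]).tail).toFinset.card = l.length := by
  rw [toFinset_card_of_nodup (nodup_tail_append_singleton hl hx)]
  simp

theorem IsSuffix.tail_append_singleton {l m : List α} (h : l <:+ m) (hlt : l.length < m.length)
    (x : α) : (l ++ [x]).tail <:+ (m ++ [x]).tail :=
  (tail_suffix _).trans <| (suffix_append_self_iff.mpr h).suffix_tail_of_length_lt (by simpa)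

theorem toFinset_tail_append_singleton_subset [DecidableEq α] {l : List α} {x : α}
    {s : Finset α} (hl : l.toFinset ⊆ s) (hx : x ∈ s) : ((l ++ [x]).tail).toFinset ⊆ s := by
  intro a ha
  rcases mem_append.mp ((tail_sublist _).subset (mem_toFinset.mp ha)) with ha | ha
  · exact hl (mem_toFinset.mpr ha)
  · rwa [eq_of_mem_singleton ha]

end List

theorem restructure_preserves_invariants_general (j : ℕ)
    (Q : ℕ → List ℕ) (Tj : Finset ℕ) (x : ℕ)
    (hnodup : ∀ ℓ, (Q ℓ).Nodup)
    (hlen : ∀ ℓ < j, (Q ℓ).length = 2 ^ 2 ^ ℓ)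
    (hsuffix : ∀ ℓ, ℓ + 1 < j → Q ℓ <:+ Q (ℓ + 1))
    (htop : (Q (j - 1)).toFinset ⊆ Tj)
    (hxTj : x ∈ Tj) (hxnot : ∀ ℓ < j, x ∉ Q ℓ) :
    (∀ ℓ < j, ((Q ℓ ++ [x]).tail).toFinset.card = 2 ^ 2 ^ ℓ) ∧
    (∀ ℓ, ℓ + 1 < j →
      ((Q ℓ ++ [x]).tail).toFinset ⊆ ((Q (ℓ + 1) ++ [x]).tail).toFinset) ∧
    ((Q (j - 1) ++ [x]).tail).toFinset ⊆ Tj := by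
  refine ⟨fun ℓ hℓ => ?_, fun ℓ hℓ => ?_, List.toFinset_tail_append_singleton_subset htop hxTj⟩
  · rw [List.card_toFinset_tail_append_singleton (hnodup ℓ) (hxnot ℓ hℓ), hlen ℓ hℓ]
  · have hlt : (Q ℓ).length < (Q (ℓ + 1)).length := by
      rw [hlen ℓ (by omega), hlen (ℓ + 1) hℓ]
      exact Nat.pow_lt_pow_right one_lt_two (Nat.pow_lt_pow_right one_lt_two ℓ.lt_succ_self)
    intro a ha
    exact List.mem_toFinset.mpr
      (((hsuffix ℓ hℓ).tail_append_singleton hlt x).subset (List.mem_toFinset.mp ha))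

/-- After accessing `x`, found in tree `T j`, the element `x` is enqueued at
the back of each queue `Q ℓ` (`ℓ < j`) and the front (least-recently inserted)
element is dequeued and deleted from the corresponding tree.  If beforehand
each `Q ℓ` has no duplicates, length `2^(2^ℓ)`, is a suffix of `Q (ℓ+1)`
(its elements are the most recently inserted elements of the next level), the
top modified level is contained in `T j`, and `x ∈ T j` but `x` is in none of
`Q 0,…,Q (j-1)`, then afterwards the size invariant `|T ℓ| = 2^(2^ℓ)` and the
nesting invariant `T ℓ ⊆ T (ℓ+1)` are preserved. -/
theorem restructure_preserves_invariants (j : ℕ) (hj : 1 ≤ j)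
    (Q : ℕ → List ℕ) (Tj : Finset ℕ) (x : ℕ)
    (hnodup : ∀ ℓ, (Q ℓ).Nodup)
    (hlen : ∀ ℓ < j, (Q ℓ).length = 2 ^ 2 ^ ℓ)
    (hsuffix : ∀ ℓ, ℓ + 1 < j → Q ℓ <:+ Q (ℓ + 1))
    (htop : (Q (j - 1)).toFinset ⊆ Tj)
    (hxTj : x ∈ Tj) (hxnot : ∀ ℓ < j, x ∉ Q ℓ) :
    (∀ ℓ < j, ((Q ℓ ++ [x]).tail).toFinset.card = 2 ^ 2 ^ ℓ) ∧
    (∀ ℓ, ℓ + 1 < j →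
      ((Q ℓ ++ [x]).tail).toFinset ⊆ ((Q (ℓ + 1) ++ [x]).tail).toFinset) ∧
    ((Q (j - 1) ++ [x]).tail).toFinset ⊆ Tj :=
  restructure_preserves_invariants_general j Q Tj x hnodup hlen hsuffix htop hxTj hxnot
end
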